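/- Let F̃ : B₀ → B₀ be a non-expansive bijection of the unit ball of c₀ satisfying the sign conditions (x_n = 0 ⇒ F̃(x)_n = 0; x_n < 0 ⇒ F̃(x)_n ≤ 0; x_n > 0 ⇒ F̃(x)_n ≥ 0). Then for each y ∈ B₀ and n ∈ ℕ: if y_n = 1 and y_i ≠ 0 for all i ≠ n, then F̃⁻¹(y)_n = 1; if y_n = −1 and y_i ≠ 0 for all i ≠ n, then F̃⁻¹(y)_n = −1. -/
import Mathlib

open Filter Topology Metric Set ENNReal

noncomputable section

/-- The space `ℓ∞` of bounded real sequences, used as ambient space. -/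
abbrev Linf := lp (fun _ : ℕ => ℝ) ∞

/-- The closed unit ball of `c` (convergent sequences), viewed inside `ℓ∞`. -/
def Bc : Set Linf := {x | ‖x‖ ≤ 1 ∧ ∃ l : ℝ, Tendsto (fun n => x n) atTop (𝓝 l)}

/-- The closed unit ball of `c₀` (null sequences), viewed inside `ℓ∞`. -/
def B0 : Set Linf := {x | ‖x‖ ≤ 1 ∧ Tendsto (fun n => x n) atTop (𝓝 (0:ℝ))}

private lemma coord_abs_le (z : Linf) (i : ℕ) : |z i| ≤ ‖z‖ := by
  have := lp.norm_apply_le_norm (E := fun _ : ℕ => ℝ) ENNReal.top_ne_zero z i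
  rwa [Real.norm_eq_abs] at this

private lemma key_lemma (F : Linf → Linf) (hbij : Set.BijOn F B0 B0)
    (hne : ∀ a ∈ B0, ∀ b ∈ B0, ‖F a - F b‖ ≤ ‖a - b‖)
    (hsign : ∀ x ∈ B0, ∀ n : ℕ,
      (x n = 0 → F x n = 0) ∧ (x n < 0 → F x n ≤ 0) ∧ (0 < x n → 0 ≤ F x n))
    {y : Linf} (hy : y ∈ B0) {x : Linf} (hx : x ∈ B0) (hFx : F x = y) (n : ℕ)
    (s : ℝ) (hs : s = 1 ∨ s = -1) (hyn : y n = s) (hynz : ∀ i ≠ n, y i ≠ 0) :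
    x n = s := by
  obtain ⟨hy1, hy2⟩ := hy
  obtain ⟨hx1, hx2⟩ := hx
  have habs : |s| = 1 := by rcases hs with h | h <;> simp [h]
  -- the flipped point y'
  set e : Linf := lp.single ∞ n (2 * s) with he
  set y' : Linf := y - e with hy'def
  have hen : e n = 2 * s := by rw [he]; exact lp.single_apply_self (E := fun _ : ℕ => ℝ) ∞ n (2 * s)
  have hei : ∀ i ≠ n, e i = 0 := fun i hi => by rw [he]; exact lp.single_apply_ne (E := fun _ : ℕ => ℝ) ∞ n (2 * s) hi
  have hy'n : y' n = -s := by
    simp only [hy'def, lp.coeFn_sub, Pi.sub_apply, hen, hyn]; ring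
  have hy'i : ∀ i ≠ n, y' i = y i := by
    intro i hi
    simp only [hy'def, lp.coeFn_sub, Pi.sub_apply, hei i hi, sub_zero]
  have hy'B0 : y' ∈ B0 := by
    constructor
    · refine lp.norm_le_of_forall_le (by norm_num) fun i => ?_
      rcases eq_or_ne i n with rfl | hi
      · simp [Real.norm_eq_abs, hy'n, habs, abs_neg]
      · rw [Real.norm_eq_abs, hy'i i hi]
        exact le_trans (coord_abs_le y i) hy1
    · refine hy2.congr' ?_
      filter_upwards [eventually_gt_atTop n] with i hi
      exact (hy'i i hi.ne').symm
  obtain ⟨w, hwB0, hFw⟩ := hbij.surjOn hy'B0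
  obtain ⟨hw1, hw2⟩ := hwB0
  -- norm of e is 2
  have hnorme : ‖e‖ = 2 := by
    have h1 : |e n| ≤ ‖e‖ := coord_abs_le e n
    have h2 : ‖e‖ ≤ 2 := by
      refine lp.norm_le_of_forall_le (by norm_num) fun i => ?_
      rcases eq_or_ne i n with rfl | hi
      · rw [Real.norm_eq_abs, hen, abs_mul, habs]; norm_num
      · simp [Real.norm_eq_abs, hei i hi]
    have h3 : |e n| = 2 := by rw [hen, abs_mul, habs]; norm_num
    linarith [h3 ▸ h1]
  have hdist2 : ‖F x - F w‖ = 2 := by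
    rw [hFx, hFw, hy'def, _root_.sub_sub_cancel, hnorme]
  have hle : ‖x - w‖ ≤ 2 := le_trans (norm_sub_le _ _) (by linarith)
  have hge : (2:ℝ) ≤ ‖x - w‖ := hdist2 ▸ hne x ⟨hx1, hx2⟩ w ⟨hw1, hw2⟩
  have hxw : ‖x - w‖ = 2 := le_antisymm hle hge
  -- coordinates of x - w
  have hcoord : ∀ i, (x - w : Linf) i = x i - w i := fun i => by
    simp [lp.coeFn_sub]
  -- the sup is attained
  have hzero : Tendsto (fun i => |x i - w i|) atTop (𝓝 0) := by
    have := (hx2.sub hw2).abs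
    simpa using this
  obtain ⟨N, hN⟩ := Filter.eventually_atTop.mp
    (hzero.eventually (gt_mem_nhds (by norm_num : (0:ℝ) < 1)))
  have hex : ∃ i, 1 < |x i - w i| := by
    by_contra hcon
    push_neg at hcon
    have : ‖x - w‖ ≤ 1 := lp.norm_le_of_forall_le zero_le_one fun i => by
      rw [Real.norm_eq_abs, hcoord i]; exact hcon i
    linarith
  obtain ⟨i₁, hi₁⟩ := hex
  have hi₁N : i₁ < N := by
    by_contra h
    exact absurd (hN i₁ (le_of_not_gt h)) (not_lt.mpr hi₁.le)
  set T : Finset ℕ := (Finset.range N).filter (fun i => 1 < |x i - w i|) with hT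
  have hTne : T.Nonempty := ⟨i₁, by simp [hT, Finset.mem_filter, hi₁N, hi₁]⟩
  obtain ⟨i₀, hi₀T, hi₀max⟩ := T.exists_max_image (fun i => |x i - w i|) hTne
  have hi₀1 : 1 < |x i₀ - w i₀| := (Finset.mem_filter.mp hi₀T).2
  have hmax : ∀ i, |x i - w i| ≤ |x i₀ - w i₀| := by
    intro i
    by_cases hi : 1 < |x i - w i|
    · have hiN : i < N := by
        by_contra h
        exact absurd (hN i (le_of_not_gt h)) (not_lt.mpr hi.le)
      exact hi₀max i (Finset.mem_filter.mpr ⟨Finset.mem_range.mpr hiN, hi⟩)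
    · exact le_trans (not_lt.mp hi) hi₀1.le
  have hattain : |x i₀ - w i₀| = 2 := by
    have h1 : ‖x - w‖ ≤ |x i₀ - w i₀| :=
      lp.norm_le_of_forall_le (abs_nonneg _) fun i => by
        rw [Real.norm_eq_abs, hcoord i]; exact hmax i
    have h2 : |x i₀ - w i₀| ≤ ‖x - w‖ := hcoord i₀ ▸ coord_abs_le (x - w) i₀
    linarith
  -- coordinate bounds
  have hxb : ∀ i, |x i| ≤ 1 := fun i => le_trans (coord_abs_le x i) hx1
  have hwb : ∀ i, |w i| ≤ 1 := fun i => le_trans (coord_abs_le w i) hw1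
  have hxi0 := abs_le.mp (hxb i₀)
  have hwi0 := abs_le.mp (hwb i₀)
  -- exact values at i₀
  have hcases : (x i₀ = 1 ∧ w i₀ = -1) ∨ (x i₀ = -1 ∧ w i₀ = 1) := by
    rcases abs_eq (by norm_num : (0:ℝ) ≤ 2) |>.mp hattain with h | h
    · left; constructor <;> linarith
    · right; constructor <;> linarith
  -- i₀ = n
  have hi₀n : i₀ = n := by
    by_contra hne'
    have hyne : y i₀ ≠ 0 := hynz i₀ hne'
    have hFxi : F x i₀ = y i₀ := by rw [hFx]
    have hFwi : F w i₀ = y i₀ := by rw [hFw, hy'i i₀ hne']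
    obtain ⟨_, hxneg, hxpos⟩ := hsign x ⟨hx1, hx2⟩ i₀
    obtain ⟨_, hwneg, hwpos⟩ := hsign w ⟨hw1, hw2⟩ i₀
    rcases hcases with ⟨ha, hb⟩ | ⟨ha, hb⟩
    · have h1 : 0 ≤ y i₀ := hFxi ▸ hxpos (by rw [ha]; norm_num)
      have h2 : y i₀ ≤ 0 := hFwi ▸ hwneg (by rw [hb]; norm_num)
      exact hyne (le_antisymm h2 h1)
    · have h1 : y i₀ ≤ 0 := hFxi ▸ hxneg (by rw [ha]; norm_num)
      have h2 : 0 ≤ y i₀ := hFwi ▸ hwpos (by rw [hb]; norm_num)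
      exact hyne (le_antisymm h1 h2)
  subst hi₀n
  -- conclude using the sign condition at n
  have hFxn : F x i₀ = s := by rw [hFx]; exact hyn
  obtain ⟨_, hxneg, _⟩ := hsign x ⟨hx1, hx2⟩ i₀
  obtain ⟨_, _, hxpos⟩ := hsign x ⟨hx1, hx2⟩ i₀
  rcases hs with rfl | rfl
  · rcases hcases with ⟨ha, _⟩ | ⟨ha, _⟩
    · exact ha
    · exfalso
      have := hxneg (by rw [ha]; norm_num)
      rw [hFxn] at this; linarith
  · rcases hcases with ⟨ha, _⟩ | ⟨ha, _⟩
    · exfalso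
      have := hxpos (by rw [ha]; norm_num)
      rw [hFxn] at this; linarith
    · exact ha

theorem inverse_attains_one_c0 (F : Linf → Linf) (hbij : Set.BijOn F B0 B0)
    (hne : ∀ a ∈ B0, ∀ b ∈ B0, ‖F a - F b‖ ≤ ‖a - b‖)
    (hsign : ∀ x ∈ B0, ∀ n : ℕ,
      (x n = 0 → F x n = 0) ∧ (x n < 0 → F x n ≤ 0) ∧ (0 < x n → 0 ≤ F x n)) :
    ∀ y ∈ B0, ∀ x ∈ B0, F x = y → ∀ n : ℕ,
      ((y n = 1 ∧ ∀ i ≠ n, y i ≠ 0) → x n = 1) ∧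
      ((y n = -1 ∧ ∀ i ≠ n, y i ≠ 0) → x n = -1) := by
  intro y hy x hx hFx n
  constructor
  · rintro ⟨h1, h2⟩
    exact key_lemma F hbij hne hsign hy hx hFx n 1 (Or.inl rfl) h1 h2
  · rintro ⟨h1, h2⟩
    exact key_lemma F hbij hne hsign hy hx hFx n (-1) (Or.inr rfl) h1 h2
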